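/- arXiv:2409.11044 — 5 statements merged into one kernel-verified Lean document; each statement's English description precedes it below -/
import Mathlib

section
/- Suppose Γ is C(1)-consistent, i.e., some C(1)-model satisfies every statement in Γ. Then for any inconsistency base (Γ', C') for (Γ, C), the set Γ' contains no strict preference statements of Γ; in particular this holds for Γ' = Γ^⊥ where (Γ^⊥, C^⊥) = MIB(Γ, C). -/
open scoped NNRat

/-- A preference statement `α < β` (strict) or `α ≤ β` (non-strict). -/
structure PrefStmt (A : Type) where
  left : A
  right : A
  strict : Bool

/-- The negation of a preference statement. -/
def negStmt {A : Type} (φ : PrefStmt A) : PrefStmt A :=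
  ⟨φ.right, φ.left, !φ.strict⟩

/-- A `C(1)`-model (a list of evaluations) satisfies `α ≤ β`. -/
def satLe {A : Type} : List (A → ℚ≥0) → A → A → Prop
  | [], _, _ => True
  | c :: H, α, β => c α < c β ∨ (c α = c β ∧ satLe H α β)

/-- A `C(1)`-model (a list of evaluations) satisfies `α < β`. -/
def satLt {A : Type} : List (A → ℚ≥0) → A → A → Prop
  | [], _, _ => False
  | c :: H, α, β => c α < c β ∨ (c α = c β ∧ satLt H α β)

/-- Satisfaction of a preference statement by a `C(1)`-model. -/
def sat {A : Type} (H : List (A → ℚ≥0)) (φ : PrefStmt A) : Prop :=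
  if φ.strict then satLt H φ.left φ.right else satLe H φ.left φ.right
/-- The evaluations in `𝒞` supporting statement `φ`. -/
def SuppSet {A : Type} (𝒞 : Finset (A → ℚ≥0)) (φ : PrefStmt A) : Set (A → ℚ≥0) :=
  {c | c ∈ 𝒞 ∧ c φ.left < c φ.right}

/-- The evaluations in `𝒞` opposing statement `φ`. -/
def OppSet {A : Type} (𝒞 : Finset (A → ℚ≥0)) (φ : PrefStmt A) : Set (A → ℚ≥0) :=
  {c | c ∈ 𝒞 ∧ c φ.right < c φ.left}

/-- `(Γ', C')` is an inconsistency base for `(Γ, 𝒞)`. -/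
def InconsBase {A : Type} (𝒞 : Finset (A → ℚ≥0)) (Γ Γ' : Set (PrefStmt A))
    (C' : Set (A → ℚ≥0)) : Prop :=
  Γ' ⊆ Γ ∧ C' ⊆ (𝒞 : Set (A → ℚ≥0)) ∧
  (∀ φ ∈ Γ', SuppSet 𝒞 φ ∪ OppSet 𝒞 φ ⊆ C') ∧
  (∀ c ∈ C', ∃ φ ∈ Γ', c ∈ OppSet 𝒞 φ)

/-- First component `Γ^⊥` of the maximal inconsistency base `MIB(Γ, 𝒞)`. -/
def MIBGamma {A : Type} (𝒞 : Finset (A → ℚ≥0)) (Γ : Set (PrefStmt A)) : Set (PrefStmt A) :=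
  {φ | ∃ Γ' C', InconsBase 𝒞 Γ Γ' C' ∧ φ ∈ Γ'}

/-- Second component `C^⊥` of the maximal inconsistency base `MIB(Γ, 𝒞)`. -/
def MIBC {A : Type} (𝒞 : Finset (A → ℚ≥0)) (Γ : Set (PrefStmt A)) : Set (A → ℚ≥0) :=
  {c | ∃ Γ' C', InconsBase 𝒞 Γ Γ' C' ∧ c ∈ C'}

/-!
Let `H` be a `C(1)`-model of `Γ` and `(Γ', C')` an inconsistency base. Walking down `H`, every
evaluation ties both sides of every statement of `Γ'`: if `c` were the first one that does not,
it would support or oppose some statement of `Γ'`, hence lie in `C'`, hence oppose some `ψ ∈ Γ'`;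
as all earlier evaluations tie `ψ`, the model would then violate `ψ`. A model in which every
evaluation ties `α` and `β` cannot satisfy `α < β`.
-/

section Satisfaction

variable {A : Type} {c : A → ℚ≥0} {H : List (A → ℚ≥0)} {φ : PrefStmt A}

lemma not_satLt_of_forall_eq {α β : A} (h : ∀ c ∈ H, c α = c β) : ¬ satLt H α β := by
  induction H with
  | nil => simp [satLt]
  | cons d T ih =>
    simp only [List.mem_cons, forall_eq_or_imp] at h
    simp [satLt, h.1, ih h.2]

lemma not_sat_cons_of_lt (h : c φ.right < c φ.left) : ¬ sat (c :: H) φ := by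
  unfold sat
  cases φ.strict <;> simp [satLt, satLe, not_lt.2 h.le, h.ne']

lemma sat_cons_iff_of_eq (h : c φ.left = c φ.right) : sat (c :: H) φ ↔ sat H φ := by
  unfold sat
  cases φ.strict <;> simp [satLt, satLe, h]

end Satisfaction

namespace InconsBase

variable {A : Type} {𝒞 : Finset (A → ℚ≥0)} {Γ Γ' : Set (PrefStmt A)} {C' : Set (A → ℚ≥0)}

lemma eq_of_sat_cons (hB : InconsBase 𝒞 Γ Γ' C') {c : A → ℚ≥0} {H : List (A → ℚ≥0)}
    (hc : c ∈ 𝒞) (hH : ∀ ψ ∈ Γ', sat (c :: H) ψ) {φ : PrefStmt A} (hφ : φ ∈ Γ') :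
    c φ.left = c φ.right := by
  by_contra hne
  have hcC' : c ∈ C' := hB.2.2.1 φ hφ <| (lt_or_gt_of_ne hne).imp (⟨hc, ·⟩) (⟨hc, ·⟩)
  obtain ⟨ψ, hψ, -, hopp⟩ := hB.2.2.2 c hcC'
  exact not_sat_cons_of_lt hopp (hH ψ hψ)

lemma forall_eq_of_sat (hB : InconsBase 𝒞 Γ Γ' C') {H : List (A → ℚ≥0)}
    (hH𝒞 : ∀ c ∈ H, c ∈ 𝒞) (hH : ∀ ψ ∈ Γ', sat H ψ) {φ : PrefStmt A} (hφ : φ ∈ Γ') :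
    ∀ c ∈ H, c φ.left = c φ.right := by
  induction H with
  | nil => simp
  | cons c T ih =>
    simp only [List.mem_cons, forall_eq_or_imp] at hH𝒞 ⊢
    have hc := fun ψ (hψ : ψ ∈ Γ') => hB.eq_of_sat_cons hH𝒞.1 hH hψ
    exact ⟨hc φ hφ, ih hH𝒞.2 fun ψ hψ => (sat_cons_iff_of_eq (hc ψ hψ)).1 (hH ψ hψ)⟩

lemma strict_eq_false (hB : InconsBase 𝒞 Γ Γ' C') {H : List (A → ℚ≥0)}
    (hH𝒞 : ∀ c ∈ H, c ∈ 𝒞) (hH : ∀ ψ ∈ Γ, sat H ψ) {φ : PrefStmt A} (hφ : φ ∈ Γ') :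
    φ.strict = false := by
  have hHΓ' : ∀ ψ ∈ Γ', sat H ψ := fun ψ hψ => hH ψ (hB.1 hψ)
  have hsat := hHΓ' φ hφ
  unfold sat at hsat
  cases hs : φ.strict
  · rfl
  · simp only [hs, if_true] at hsat
    exact absurd hsat (not_satLt_of_forall_eq (hB.forall_eq_of_sat hH𝒞 hHΓ' hφ))

end InconsBase

theorem stmt_6_general {A : Type} (𝒞 : Finset (A → ℚ≥0)) (Γ : Set (PrefStmt A))
    (hcons : ∃ H : List (A → ℚ≥0), H.Nodup ∧ (∀ c ∈ H, c ∈ 𝒞) ∧ ∀ φ ∈ Γ, sat H φ) :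
    (∀ Γ' C', InconsBase 𝒞 Γ Γ' C' → ∀ φ ∈ Γ', φ.strict = false) ∧
    (∀ φ ∈ MIBGamma 𝒞 Γ, φ.strict = false) := by
  obtain ⟨H, -, hH𝒞, hH⟩ := hcons
  have hbase : ∀ Γ' C', InconsBase 𝒞 Γ Γ' C' → ∀ φ ∈ Γ', φ.strict = false :=
    fun _ _ hB _ hφ => hB.strict_eq_false hH𝒞 hH hφ
  exact ⟨hbase, fun φ ⟨Γ', C', hB, hφ⟩ => hbase Γ' C' hB φ hφ⟩

/-- If `Γ` is `C(1)`-consistent, then no inconsistency base for `(Γ, 𝒞)` contains a strict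
statement; in particular `Γ^⊥` contains no strict statement. -/
theorem stmt_6 {A : Type} [Fintype A] (𝒞 : Finset (A → ℚ≥0)) (Γ : Set (PrefStmt A))
    (hcons : ∃ H : List (A → ℚ≥0), H.Nodup ∧ (∀ c ∈ H, c ∈ 𝒞) ∧ ∀ φ ∈ Γ, sat H φ) :
    (∀ Γ' C', InconsBase 𝒞 Γ Γ' C' → ∀ φ ∈ Γ', φ.strict = false) ∧
    (∀ φ ∈ MIBGamma 𝒞 Γ, φ.strict = false) :=
  stmt_6_general 𝒞 Γ hcons
end

section
/- Let H be any output of the greedy algorithm on (Γ, C), write MIB(Γ, C) = (Γ^⊥, C^⊥), and suppose H' is a C(1)-model satisfying every statement in Γ^(≤). Then for every φ ∈ Γ, if H' satisfies φ then H satisfies φ; moreover σ(H') ⊆ σ(H) = C − C^⊥. -/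
open scoped NNRat

/-- `Opp(c)`: the statements of `Γ` opposed by evaluation `c`. -/
def OppG {A : Type} (Γ : Set (PrefStmt A)) (c : A → ℚ≥0) : Set (PrefStmt A) :=
  {φ | φ ∈ Γ ∧ c φ.right < c φ.left}

/-- `Supp(c₁,…,c_m)`: the statements of `Γ` supported by some evaluation of the list `L`. -/
def SuppL {A : Type} (Γ : Set (PrefStmt A)) (L : List (A → ℚ≥0)) : Set (PrefStmt A) :=
  {φ | φ ∈ Γ ∧ ∃ c ∈ L, c φ.left < c φ.right}

/-- `H` is a possible output of the greedy algorithm on `(Γ, 𝒞)`. -/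
def GreedyOutput {A : Type} (𝒞 : Finset (A → ℚ≥0)) (Γ : Set (PrefStmt A))
    (H : List (A → ℚ≥0)) : Prop :=
  H.Nodup ∧ (∀ c ∈ H, c ∈ 𝒞) ∧
  (∀ i : Fin H.length, OppG Γ (H.get i) ⊆ SuppL Γ (H.take i.1)) ∧
  (∀ c ∈ 𝒞, c ∉ H → ¬ (OppG Γ c ⊆ SuppL Γ H))
/-- `H` is a `D(1)`-model: a duplicate-free list of evaluations from `D`. -/
def IsModel {A : Type} (D : Set (A → ℚ≥0)) (H : List (A → ℚ≥0)) : Prop :=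
  H.Nodup ∧ ∀ c ∈ H, c ∈ D

/-- `H` is a `D(1*)`-model: a duplicate-free list whose entries are exactly `D`. -/
def IsFullModel {A : Type} (D : Set (A → ℚ≥0)) (H : List (A → ℚ≥0)) : Prop :=
  H.Nodup ∧ ∀ c, c ∈ H ↔ c ∈ D

/-- `H` satisfies every statement in `Γ`. -/
def SatAll {A : Type} (H : List (A → ℚ≥0)) (Γ : Set (PrefStmt A)) : Prop :=
  ∀ φ ∈ Γ, sat H φ

/-- `Γ ⊨_{D(1)} φ`. -/
def Entails {A : Type} (D : Set (A → ℚ≥0)) (Γ : Set (PrefStmt A)) (φ : PrefStmt A) : Prop :=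
  ∀ H, IsModel D H → SatAll H Γ → sat H φ

/-- `Γ ⊨_{D(1*)} φ`. -/
def EntailsStar {A : Type} (D : Set (A → ℚ≥0)) (Γ : Set (PrefStmt A)) (φ : PrefStmt A) : Prop :=
  ∀ H, IsFullModel D H → SatAll H Γ → sat H φ

/-- `Γ` is strongly `D(1)`-consistent. -/
def StrongCons {A : Type} (D : Set (A → ℚ≥0)) (Γ : Set (PrefStmt A)) : Prop :=
  ∃ H, IsFullModel D H ∧ SatAll H Γ

/-!
A list satisfies `α ≤ β` exactly when every entry opposing it is preceded by an entry supporting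
it, and the greedy condition says precisely this for `H` and every statement of `Γ`; a strict
statement additionally needs one supporting entry, which transfers from `H'` once `σ(H') ⊆ σ(H)`.
That inclusion holds by induction along `H'`: the first entry outside `H` opposes some statement
left unsupported by `H` (maximality of `H`), yet `H'` must support it earlier, with an entry
already in `H`. Finally, the evaluations outside `H` together with the statements unsupported by
`H` form an inconsistency base, while no entry of `H` lies in any base: by induction along `H`,
a statement it opposes is supported by an earlier entry, which every base containing that
statement must contain as well.
-/

theorem List.forall_mem_of_forall_take {α : Type*} {P : α → Prop} :
    ∀ {L : List α}, (∀ i (hi : i < L.length), (∀ d ∈ L.take i, P d) → P L[i]) → ∀ c ∈ L, P c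
  | [], _ => by simp
  | c :: L, h => by
    have hc : P c := h 0 (by simp) (by simp)
    have hL : ∀ d ∈ L, P d := List.forall_mem_of_forall_take fun i hi hprefix =>
      h (i + 1) (by simpa using hi) (by simpa [hc] using hprefix)
    simpa [hc] using hL

section Satisfaction

variable {A : Type}

theorem satLe_iff_forall_opp {L : List (A → ℚ≥0)} {α β : A} :
    satLe L α β ↔
      ∀ i (hi : i < L.length), L[i] β < L[i] α → ∃ d ∈ L.take i, d α < d β := by
  induction L with
  | nil => simp [satLe]
  | cons c L ih =>
    rw [satLe, ih]
    constructor
    · rintro (hlt | ⟨heq, hL⟩) (_ | i) hi hopp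
      · exact absurd hlt (asymm hopp)
      · exact ⟨c, by simp, hlt⟩
      · exact absurd heq (ne_of_gt hopp)
      · obtain ⟨d, hd, hsupp⟩ := hL i (by simpa using hi) hopp
        exact ⟨d, List.mem_cons_of_mem c hd, hsupp⟩
    · intro h
      rcases lt_trichotomy (c α) (c β) with hlt | heq | hgt
      · exact Or.inl hlt
      · refine Or.inr ⟨heq, fun i hi hopp => ?_⟩
        obtain ⟨d, hd, hsupp⟩ := h (i + 1) (by simpa using hi) hopp
        rcases List.mem_cons.mp hd with rfl | hd
        · exact absurd heq (ne_of_lt hsupp)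
        · exact ⟨d, hd, hsupp⟩
      · simpa using h 0 (by simp) hgt

theorem satLt_iff_satLe_and_exists {L : List (A → ℚ≥0)} {α β : A} :
    satLt L α β ↔ satLe L α β ∧ ∃ c ∈ L, c α < c β := by
  induction L with
  | nil => simp [satLt]
  | cons c L ih =>
    rw [satLt, satLe, ih]
    constructor
    · rintro (hlt | ⟨heq, hL, d, hd, hsupp⟩)
      · exact ⟨Or.inl hlt, c, by simp, hlt⟩
      · exact ⟨Or.inr ⟨heq, hL⟩, d, List.mem_cons_of_mem c hd, hsupp⟩
    · rintro ⟨hlt | ⟨heq, hL⟩, d, hd, hsupp⟩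
      · exact Or.inl hlt
      · rcases List.mem_cons.mp hd with rfl | hd
        · exact absurd heq (ne_of_lt hsupp)
        · exact Or.inr ⟨heq, hL, d, hd, hsupp⟩

end Satisfaction

namespace GreedyOutput

variable {A : Type} {𝒞 : Finset (A → ℚ≥0)} {Γ : Set (PrefStmt A)} {H : List (A → ℚ≥0)}

theorem exists_take_supp_of_opp (hgo : GreedyOutput 𝒞 Γ H) {φ : PrefStmt A} (hφ : φ ∈ Γ)
    {i : ℕ} (hi : i < H.length) (hopp : H[i] φ.right < H[i] φ.left) :
    ∃ d ∈ H.take i, d φ.left < d φ.right :=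
  (hgo.2.2.1 ⟨i, hi⟩ ⟨hφ, hopp⟩).2

theorem satLe_of_mem (hgo : GreedyOutput 𝒞 Γ H) {φ : PrefStmt A} (hφ : φ ∈ Γ) :
    satLe H φ.left φ.right :=
  satLe_iff_forall_opp.mpr fun _ hi hopp => hgo.exists_take_supp_of_opp hφ hi hopp

theorem subset_of_satLe (hgo : GreedyOutput 𝒞 Γ H) {H' : List (A → ℚ≥0)}
    (hH' : IsModel (𝒞 : Set (A → ℚ≥0)) H') (hsat' : ∀ φ ∈ Γ, satLe H' φ.left φ.right) :
    ∀ c ∈ H', c ∈ H := by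
  refine List.forall_mem_of_forall_take fun i hi hprefix => ?_
  by_contra hnot
  obtain ⟨φ, ⟨hφ, hopp⟩, hunsupp⟩ :=
    Set.not_subset.mp (hgo.2.2.2 _ (hH'.2 _ (List.getElem_mem hi)) hnot)
  obtain ⟨d, hd, hsupp⟩ := satLe_iff_forall_opp.mp (hsat' φ hφ) i hi hopp
  exact hunsupp ⟨hφ, d, hprefix d hd, hsupp⟩

theorem notMem_MIBC (hgo : GreedyOutput 𝒞 Γ H) : ∀ c ∈ H, c ∉ MIBC 𝒞 Γ := by
  refine List.forall_mem_of_forall_take fun i hi hprefix => ?_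
  rintro ⟨Γ', C', hbase, hc⟩
  obtain ⟨φ, hφ, -, hopp⟩ := hbase.2.2.2 _ hc
  obtain ⟨d, hd, hsupp⟩ := hgo.exists_take_supp_of_opp (hbase.1 hφ) hi hopp
  have hd𝒞 : d ∈ 𝒞 := hgo.2.1 d (List.mem_of_mem_take hd)
  exact hprefix d hd ⟨Γ', C', hbase, hbase.2.2.1 φ hφ (Or.inl ⟨hd𝒞, hsupp⟩)⟩

theorem inconsBase_sdiff (hgo : GreedyOutput 𝒞 Γ H) :
    InconsBase 𝒞 Γ (Γ \ SuppL Γ H) ((𝒞 : Set (A → ℚ≥0)) \ {c | c ∈ H}) := by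
  refine ⟨Set.sdiff_subset, Set.sdiff_subset, ?_, ?_⟩
  · rintro φ ⟨hφ, hunsupp⟩ c (⟨hc, hsupp⟩ | ⟨hc, hopp⟩)
    · exact ⟨hc, fun hcH => hunsupp ⟨hφ, c, hcH, hsupp⟩⟩
    · refine ⟨hc, fun hcH => ?_⟩
      obtain ⟨i, hi, rfl⟩ := List.getElem_of_mem hcH
      obtain ⟨d, hd, hsupp⟩ := hgo.exists_take_supp_of_opp hφ hi hopp
      exact hunsupp ⟨hφ, d, List.mem_of_mem_take hd, hsupp⟩
  · rintro c ⟨hc, hcH⟩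
    obtain ⟨φ, ⟨hφ, hopp⟩, hunsupp⟩ := Set.not_subset.mp (hgo.2.2.2 c hc hcH)
    exact ⟨φ, ⟨hφ, hunsupp⟩, hc, hopp⟩

theorem setOf_mem_eq_sdiff_MIBC (hgo : GreedyOutput 𝒞 Γ H) :
    {c | c ∈ H} = (𝒞 : Set (A → ℚ≥0)) \ MIBC 𝒞 Γ := by
  ext c
  refine ⟨fun hc => ⟨hgo.2.1 c hc, hgo.notMem_MIBC c hc⟩, fun ⟨hc, hnot⟩ => ?_⟩
  by_contra hcH
  exact hnot ⟨_, _, hgo.inconsBase_sdiff, hc, hcH⟩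

end GreedyOutput

theorem stmt_10_general {A : Type} (𝒞 : Finset (A → ℚ≥0)) (Γ : Set (PrefStmt A))
    (H : List (A → ℚ≥0)) (hgo : GreedyOutput 𝒞 Γ H)
    (H' : List (A → ℚ≥0)) (hH' : IsModel (𝒞 : Set (A → ℚ≥0)) H')
    (hsat' : ∀ φ ∈ Γ, satLe H' φ.left φ.right) :
    (∀ φ ∈ Γ, sat H' φ → sat H φ) ∧
    {c | c ∈ H'} ⊆ {c | c ∈ H} ∧
    {c | c ∈ H} = (𝒞 : Set (A → ℚ≥0)) \ MIBC 𝒞 Γ := by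
  have hsub : ∀ c ∈ H', c ∈ H := hgo.subset_of_satLe hH' hsat'
  refine ⟨fun φ hφ hsat => ?_, hsub, hgo.setOf_mem_eq_sdiff_MIBC⟩
  unfold sat at hsat ⊢
  split_ifs at hsat ⊢
  · obtain ⟨-, c, hc, hsupp⟩ := satLt_iff_satLe_and_exists.mp hsat
    exact satLt_iff_satLe_and_exists.mpr ⟨hgo.satLe_of_mem hφ, c, hsub c hc, hsupp⟩
  · exact hgo.satLe_of_mem hφ

/-- If `H` is an output of the greedy algorithm and `H'` is a `C(1)`-model of `Γ^(≤)`, then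
every `φ ∈ Γ` satisfied by `H'` is satisfied by `H`, and `σ(H') ⊆ σ(H) = 𝒞 − C^⊥`. -/
theorem stmt_10 {A : Type} [Fintype A] (𝒞 : Finset (A → ℚ≥0)) (Γ : Set (PrefStmt A))
    (H : List (A → ℚ≥0)) (hgo : GreedyOutput 𝒞 Γ H)
    (H' : List (A → ℚ≥0)) (hH' : IsModel (𝒞 : Set (A → ℚ≥0)) H')
    (hsat' : ∀ φ ∈ Γ, satLe H' φ.left φ.right) :
    (∀ φ ∈ Γ, sat H' φ → sat H φ) ∧
    {c | c ∈ H'} ⊆ {c | c ∈ H} ∧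
    {c | c ∈ H} = (𝒞 : Set (A → ℚ≥0)) \ MIBC 𝒞 Γ :=
  stmt_10_general 𝒞 Γ H hgo H' hH' hsat'
end

section
/- Write MIB(Γ, C) = (Γ^⊥, C^⊥). Then Γ is strongly C(1)-consistent if and only if C^⊥ = ∅ and every strict statement of Γ belongs to Supp(C), i.e., every strict φ ∈ Γ has some c ∈ C with c(α_φ) < c(β_φ). -/
open scoped NNRat

/-!
A model `H` listing all of `C` that satisfies `Γ` can never reach an evaluation of an
inconsistency base `(Γ', C')`: the first such entry opposes some `φ ∈ Γ'`, while no earlier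
entry supports `φ` (it would lie in `C'`), so `H` violates `φ`. Hence `C^⊥ = ∅`, and a strict
statement needs a supporting evaluation somewhere in `H`.

Conversely, if `C^⊥ = ∅`, every nonempty `R ⊆ C` has an element opposing no statement of `Γ`
whose supporters and opponents all lie in `R` (otherwise `R` with those statements would be an
inconsistency base). Putting such an element first and recursing on the rest of `R` yields a
model of `C` weakly satisfying all of `Γ`; a weakly satisfied statement with a supporter in the
model is satisfied strictly.
-/

section Lexicographic

variable {A : Type} {H : List (A → ℚ≥0)} {α β : A}

theorem satLe_of_satLt (h : satLt H α β) : satLe H α β := by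
  induction H with
  | nil => exact h.elim
  | cons c T ih => exact h.imp_right fun ⟨heq, hT⟩ => ⟨heq, ih hT⟩

theorem exists_lt_of_satLt (h : satLt H α β) : ∃ c ∈ H, c α < c β := by
  induction H with
  | nil => exact h.elim
  | cons c T ih =>
    rcases h with hlt | ⟨_, hT⟩
    · exact ⟨c, List.mem_cons_self, hlt⟩
    · obtain ⟨d, hd, hlt⟩ := ih hT
      exact ⟨d, List.mem_cons_of_mem _ hd, hlt⟩

theorem satLt_of_satLe_of_exists_lt (h : satLe H α β) (hsupp : ∃ c ∈ H, c α < c β) :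
    satLt H α β := by
  induction H with
  | nil => simp at hsupp
  | cons c T ih =>
    refine h.imp_right fun ⟨heq, hT⟩ => ⟨heq, ih hT ?_⟩
    obtain ⟨d, hd, hlt⟩ := hsupp
    rcases List.mem_cons.mp hd with rfl | hdT
    · exact absurd heq hlt.ne
    · exact ⟨d, hdT, hlt⟩

theorem satLe_of_sat {φ : PrefStmt A} (h : sat H φ) : satLe H φ.left φ.right := by
  unfold sat at h
  split at h
  · exact satLe_of_satLt h
  · exact h

theorem satLt_of_sat_of_strict {φ : PrefStmt A} (h : sat H φ) (hφ : φ.strict = true) :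
    satLt H φ.left φ.right := by
  simpa [sat, hφ] using h

theorem sat_of_satLe {φ : PrefStmt A} (h : satLe H φ.left φ.right)
    (hsupp : φ.strict = true → ∃ c ∈ H, c φ.left < c φ.right) : sat H φ := by
  unfold sat
  split
  · rename_i hφ
    exact satLt_of_satLe_of_exists_lt h (hsupp hφ)
  · exact h

end Lexicographic

section InconsistencyBase

variable {A : Type} (𝒞 : Finset (A → ℚ≥0))

theorem notMem_of_satLe_of_inconsBase {Γ' : Set (PrefStmt A)} {C' : Set (A → ℚ≥0)}
    (hsupp : ∀ φ ∈ Γ', SuppSet 𝒞 φ ∪ OppSet 𝒞 φ ⊆ C')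
    (hopp : ∀ c ∈ C', ∃ φ ∈ Γ', c ∈ OppSet 𝒞 φ) :
    ∀ H : List (A → ℚ≥0), (∀ c ∈ H, c ∈ 𝒞) →
      (∀ φ ∈ Γ', satLe H φ.left φ.right) → ∀ d ∈ C', d ∉ H := by
  intro H
  induction H with
  | nil => simp
  | cons c T ih =>
    intro hH hsat
    have hc : c ∉ C' := by
      intro hc
      obtain ⟨φ, hφ, -, hgt⟩ := hopp c hc
      rcases hsat φ hφ with hlt | ⟨heq, -⟩
      · exact lt_asymm hlt hgt
      · exact hgt.ne' heq
    have hsatT : ∀ φ ∈ Γ', satLe T φ.left φ.right := by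
      intro φ hφ
      rcases hsat φ hφ with hlt | ⟨-, hT⟩
      · exact absurd (hsupp φ hφ (Or.inl ⟨hH c List.mem_cons_self, hlt⟩)) hc
      · exact hT
    intro d hd hdH
    rcases List.mem_cons.mp hdH with rfl | hdT
    · exact hc hd
    · exact ih (fun x hx => hH x (List.mem_cons_of_mem _ hx)) hsatT d hd hdT

variable {𝒞} {Γ : Set (PrefStmt A)}

theorem exists_mem_forall_notMem_oppSet (hM : MIBC 𝒞 Γ = ∅) {R : Finset (A → ℚ≥0)}
    (hR : R ⊆ 𝒞) (hne : R.Nonempty) :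
    ∃ c ∈ R, ∀ φ ∈ Γ, SuppSet 𝒞 φ ∪ OppSet 𝒞 φ ⊆ ↑R → c ∉ OppSet 𝒞 φ := by
  by_contra! hopp
  obtain ⟨c, hc⟩ := hne
  have hbase : InconsBase 𝒞 Γ {φ ∈ Γ | SuppSet 𝒞 φ ∪ OppSet 𝒞 φ ⊆ ↑R} ↑R :=
    ⟨fun _ hφ => hφ.1, Finset.coe_subset.mpr hR, fun _ hφ => hφ.2,
      fun x hx => by
        obtain ⟨φ, hφ, hsub, hx⟩ := hopp x hx
        exact ⟨φ, ⟨hφ, hsub⟩, hx⟩⟩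
  have hcM : c ∈ MIBC 𝒞 Γ := ⟨_, _, hbase, hc⟩
  simp [hM] at hcM

theorem exists_isFullModel_satLe_of_MIBC_eq_empty (hM : MIBC 𝒞 Γ = ∅)
    (R : Finset (A → ℚ≥0)) (hR : R ⊆ 𝒞) :
    ∃ L, IsFullModel (↑R : Set (A → ℚ≥0)) L ∧
      ∀ φ ∈ Γ, SuppSet 𝒞 φ ∪ OppSet 𝒞 φ ⊆ ↑R → satLe L φ.left φ.right := by
  classical
  induction R using Finset.strongInduction with
  | _ R IH =>
  rcases R.eq_empty_or_nonempty with rfl | hne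
  · exact ⟨[], ⟨List.nodup_nil, by simp⟩, fun _ _ _ => trivial⟩
  obtain ⟨c₀, hc₀R, hc₀⟩ := exists_mem_forall_notMem_oppSet hM hR hne
  obtain ⟨L, ⟨hnd, hL⟩, hsat⟩ := IH (R.erase c₀) (Finset.erase_ssubset hc₀R)
    ((R.erase_subset c₀).trans hR)
  refine ⟨c₀ :: L, ⟨List.nodup_cons.mpr ⟨fun h => by simpa using hL c₀ |>.mp h, hnd⟩, ?_⟩, ?_⟩
  · intro c
    by_cases hc : c = c₀
    · simp [hc, hc₀R]
    · simpa [hc] using hL c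
  · intro φ hφ hsub
    by_cases hlt : c₀ φ.left < c₀ φ.right
    · exact Or.inl hlt
    have hsupp : c₀ ∉ SuppSet 𝒞 φ := fun h => hlt h.2
    have hopp : c₀ ∉ OppSet 𝒞 φ := hc₀ φ hφ hsub
    have heq : c₀ φ.left = c₀ φ.right :=
      le_antisymm (not_lt.mp fun h => hopp ⟨hR hc₀R, h⟩) (not_lt.mp hlt)
    have hsub' : SuppSet 𝒞 φ ∪ OppSet 𝒞 φ ⊆ ↑(R.erase c₀) := by
      intro x hx
      have hx₀ : x ≠ c₀ := by
        rintro rfl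
        exact hx.elim hsupp hopp
      simpa [hx₀] using hsub hx
    exact Or.inr ⟨heq, hsat φ hφ hsub'⟩

end InconsistencyBase

theorem stmt_12_general {A : Type} (𝒞 : Finset (A → ℚ≥0)) (Γ : Set (PrefStmt A)) :
    StrongCons (𝒞 : Set (A → ℚ≥0)) Γ ↔
      (MIBC 𝒞 Γ = ∅ ∧ ∀ φ ∈ Γ, φ.strict = true → ∃ c ∈ 𝒞, c φ.left < c φ.right) := by
  constructor
  · rintro ⟨H, ⟨-, hH⟩, hsat⟩
    refine ⟨Set.eq_empty_iff_forall_notMem.mpr ?_, fun φ hφ hstrict => ?_⟩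
    · rintro c ⟨Γ', C', ⟨hΓ', hC', hsupp, hopp⟩, hc⟩
      exact notMem_of_satLe_of_inconsBase 𝒞 hsupp hopp H (fun x => (hH x).mp)
        (fun φ hφ => satLe_of_sat (hsat φ (hΓ' hφ))) c hc ((hH c).mpr (hC' hc))
    · obtain ⟨c, hc, hlt⟩ := exists_lt_of_satLt (satLt_of_sat_of_strict (hsat φ hφ) hstrict)
      exact ⟨c, (hH c).mp hc, hlt⟩
  · rintro ⟨hM, hstrict⟩
    obtain ⟨L, hL, hsat⟩ := exists_isFullModel_satLe_of_MIBC_eq_empty hM 𝒞 subset_rfl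
    refine ⟨L, hL, fun φ hφ => sat_of_satLe ?_ fun hs => ?_⟩
    · exact hsat φ hφ (Set.union_subset (fun _ h => h.1) (fun _ h => h.1))
    · obtain ⟨c, hc, hlt⟩ := hstrict φ hφ hs
      exact ⟨c, (hL.2 c).mpr hc, hlt⟩

/-- `Γ` is strongly `C(1)`-consistent iff `C^⊥ = ∅` and every strict statement of `Γ` is
supported by some evaluation in `𝒞`. -/
theorem stmt_12 {A : Type} [Fintype A] (𝒞 : Finset (A → ℚ≥0)) (Γ : Set (PrefStmt A)) :
    StrongCons (𝒞 : Set (A → ℚ≥0)) Γ ↔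
      (MIBC 𝒞 Γ = ∅ ∧ ∀ φ ∈ Γ, φ.strict = true → ∃ c ∈ 𝒞, c φ.left < c φ.right) :=
  stmt_12_general 𝒞 Γ
end

section
/- Suppose Γ is strongly C(1)-consistent. Then for all alternatives α, β: Γ ⊨_{C(1*)} α < β if and only if Γ ⊨_{C(1)} α ≤ β and there exists some c ∈ C with c(α) ≠ c(β). -/
open scoped NNRat

/-!
Proof idea. The only nontrivial point is that `Γ ⊨_{C(1*)} α < β` forces `α ≤ β` in every
`C(1)`-model `H` of `Γ`. Append to `H` the missing evaluations, in the order of a fixed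
`C(1*)`-model `H₀` of `Γ`. A statement of `Γ` is either satisfied strictly by the prefix `H`, or
tied on `H` and then decided by the appended part, which is `H₀` with some evaluations deleted
that are all tied on that statement. So the completion is a `C(1*)`-model of `Γ`, hence satisfies
`α < β`, and its prefix `H` satisfies `α ≤ β`.
-/

section Satisfaction

variable {A : Type}

lemma sat_nil (φ : PrefStmt A) : sat [] φ ↔ φ.strict = false := by
  cases hs : φ.strict <;> simp [sat, satLe, satLt, hs]

lemma sat_cons (c : A → ℚ≥0) (H : List (A → ℚ≥0)) (φ : PrefStmt A) :
    sat (c :: H) φ ↔ c φ.left < c φ.right ∨ (c φ.left = c φ.right ∧ sat H φ) := by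
  cases hs : φ.strict <;> simp [sat, satLe, satLt, hs]

lemma sat_append (H L : List (A → ℚ≥0)) (φ : PrefStmt A) :
    sat (H ++ L) φ ↔
      satLt H φ.left φ.right ∨ ((∀ c ∈ H, c φ.left = c φ.right) ∧ sat L φ) := by
  induction H with
  | nil => simp [satLt]
  | cons c H ih =>
    rw [List.cons_append, sat_cons, ih]
    simp only [satLt, List.forall_mem_cons]
    tauto

lemma sat_iff_satLt_or_forall_eq (H : List (A → ℚ≥0)) (φ : PrefStmt A) :
    sat H φ ↔
      satLt H φ.left φ.right ∨ ((∀ c ∈ H, c φ.left = c φ.right) ∧ φ.strict = false) := by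
  simpa [sat_nil] using sat_append H [] φ

lemma sat_filter_iff_of_forall_eq {H : List (A → ℚ≥0)} {φ : PrefStmt A}
    (p : (A → ℚ≥0) → Bool) (hp : ∀ c ∈ H, p c = false → c φ.left = c φ.right) :
    sat (H.filter p) φ ↔ sat H φ := by
  induction H with
  | nil => rfl
  | cons c H ih =>
    have ih := ih fun d hd => hp d (List.mem_cons_of_mem c hd)
    cases hc : p c
    · rw [List.filter_cons_of_neg (by simp [hc]), ih, sat_cons, hp c List.mem_cons_self hc]
      simp
    · rw [List.filter_cons_of_pos hc, sat_cons, sat_cons, ih]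

lemma exists_ne_of_satLt {H : List (A → ℚ≥0)} {α β : A} (h : satLt H α β) :
    ∃ c ∈ H, c α ≠ c β := by
  induction H with
  | nil => exact h.elim
  | cons c H ih =>
    rcases h with h | ⟨-, h⟩
    · exact ⟨c, List.mem_cons_self, h.ne⟩
    · obtain ⟨d, hd, hne⟩ := ih h
      exact ⟨d, List.mem_cons_of_mem c hd, hne⟩

end Satisfaction

section Completion

variable {A : Type} [DecidableEq (A → ℚ≥0)]

def completion (H H₀ : List (A → ℚ≥0)) : List (A → ℚ≥0) :=
  H ++ H₀.filter (· ∉ H)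

lemma IsModel.isFullModel_completion {D : Set (A → ℚ≥0)} {H H₀ : List (A → ℚ≥0)}
    (hH : IsModel D H) (hH₀ : IsFullModel D H₀) : IsFullModel D (completion H H₀) := by
  refine ⟨hH.1.append (hH₀.1.filter _) fun c hc hc' => ?_, fun c => ?_⟩
  · exact (of_decide_eq_true (List.mem_filter.mp hc').2) hc
  · simp only [completion, List.mem_append, List.mem_filter, decide_eq_true_eq, ← hH₀.2 c]
    constructor
    · rintro (hc | ⟨hc, -⟩)
      exacts [(hH₀.2 c).mpr (hH.2 c hc), hc]
    · intro hc
      by_cases hcH : c ∈ H <;> simp [hc, hcH]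

lemma SatAll.completion {Γ : Set (PrefStmt A)} {H H₀ : List (A → ℚ≥0)}
    (hH : SatAll H Γ) (hH₀ : SatAll H₀ Γ) : SatAll (completion H H₀) Γ := by
  intro φ hφ
  rcases (sat_iff_satLt_or_forall_eq H φ).mp (hH φ hφ) with hlt | ⟨htie, -⟩
  · exact (sat_append _ _ φ).mpr (Or.inl hlt)
  · have hfilter := sat_filter_iff_of_forall_eq (H := H₀) (φ := φ) (· ∉ H)
      fun c _ hc => htie c (by simpa using hc)
    exact (sat_append _ _ φ).mpr (Or.inr ⟨htie, hfilter.mpr (hH₀ φ hφ)⟩)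

end Completion

theorem stmt_15_general {A : Type} (𝒞 : Finset (A → ℚ≥0)) (Γ : Set (PrefStmt A))
    (h : StrongCons (𝒞 : Set (A → ℚ≥0)) Γ) (α β : A) :
    EntailsStar (𝒞 : Set (A → ℚ≥0)) Γ ⟨α, β, true⟩ ↔
      (Entails (𝒞 : Set (A → ℚ≥0)) Γ ⟨α, β, false⟩ ∧ ∃ c ∈ 𝒞, c α ≠ c β) := by
  classical
  obtain ⟨H₀, hH₀, hΓH₀⟩ := h
  constructor
  · intro hstar
    refine ⟨fun H hH hΓH => ?_, ?_⟩
    · have hlt := hstar _ (hH.isFullModel_completion hH₀) (hΓH.completion hΓH₀)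
      rcases (sat_append _ _ _).mp hlt with hlt | ⟨htie, -⟩
      exacts [(sat_iff_satLt_or_forall_eq _ _).mpr (Or.inl hlt),
        (sat_iff_satLt_or_forall_eq _ _).mpr (Or.inr ⟨htie, rfl⟩)]
    · obtain ⟨c, hc, hne⟩ := exists_ne_of_satLt (hstar H₀ hH₀ hΓH₀)
      exact ⟨c, by exact_mod_cast (hH₀.2 c).mp hc, hne⟩
  · rintro ⟨hent, c, hc, hne⟩ H hH hΓH
    have hle := hent H ⟨hH.1, fun d hd => (hH.2 d).mp hd⟩ hΓH
    rcases (sat_iff_satLt_or_forall_eq H _).mp hle with hlt | ⟨htie, -⟩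
    · exact hlt
    · exact absurd (htie c ((hH.2 c).mpr (by exact_mod_cast hc))) hne

/-- If `Γ` is strongly `C(1)`-consistent, then `Γ ⊨_{C(1*)} α < β` iff `Γ ⊨_{C(1)} α ≤ β` and
`α` and `β` differ on some element of `𝒞`. -/
theorem stmt_15 {A : Type} [Fintype A] (𝒞 : Finset (A → ℚ≥0)) (Γ : Set (PrefStmt A))
    (h : StrongCons (𝒞 : Set (A → ℚ≥0)) Γ) (α β : A) :
    EntailsStar (𝒞 : Set (A → ℚ≥0)) Γ ⟨α, β, true⟩ ↔
      (Entails (𝒞 : Set (A → ℚ≥0)) Γ ⟨α, β, false⟩ ∧ ∃ c ∈ 𝒞, c α ≠ c β) :=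
  stmt_15_general 𝒞 Γ h α β
end

section
/- Suppose Γ is C(1)-consistent, write MIB(Γ, C) = (Γ^⊥, C^⊥), and let C' = C − C^⊥. Then Γ is strongly C'(1)-consistent (i.e., some duplicate-free list containing exactly the elements of C' satisfies Γ), and for every preference statement φ: Γ ⊨_{C(1)} φ if and only if Γ ⊨_{C'(1)} φ. -/
open scoped NNRat

/-! Every model of `Γ` avoids `C^⊥`. Reading the list from the front, an entry lying in an
inconsistency base `(Γ', C')` opposes some statement of `Γ'`, which the list would then violate;
an entry outside `C'` neither supports nor opposes any statement of `Γ'`, so the rest of the list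
must satisfy `Γ'` on its own.

Conversely, a model of `Γ` missing some evaluation of `𝒞 \ C^⊥` can be extended by one of them.
Otherwise every candidate opposes a statement of `Γ` on which the model is indifferent; these
statements, with their supporters and opponents, join `MIB(Γ, 𝒞)` to an inconsistency base
containing the candidates, which is impossible as `MIB(Γ, 𝒞)` contains every base. Extending a
given model until it exhausts `𝒞 \ C^⊥` gives strong consistency, and by avoidance the
`C(1)`-models and `C'(1)`-models of `Γ` are the same lists. -/

section

variable {A : Type}

def Ties (H : List (A → ℚ≥0)) (φ : PrefStmt A) : Prop :=
  ∀ d ∈ H, d φ.left = d φ.right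

theorem sat_nil_iff {φ : PrefStmt A} : sat [] φ ↔ φ.strict = false := by
  cases hb : φ.strict <;> simp [sat, hb, satLt, satLe]

theorem sat_cons_iff {c : A → ℚ≥0} {H : List (A → ℚ≥0)} {φ : PrefStmt A} :
    sat (c :: H) φ ↔ c φ.left < c φ.right ∨ (c φ.left = c φ.right ∧ sat H φ) := by
  cases hb : φ.strict <;> simp [sat, hb, satLt, satLe]

theorem sat_append_singleton {c : A → ℚ≥0} {φ : PrefStmt A} :
    ∀ {H : List (A → ℚ≥0)}, sat H φ → (Ties H φ → c φ.left ≤ c φ.right) → sat (H ++ [c]) φ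
  | [], hsat, hc => by
    rw [List.nil_append, sat_cons_iff]
    rcases (hc (by simp [Ties])).lt_or_eq with h | h
    exacts [Or.inl h, Or.inr ⟨h, hsat⟩]
  | d :: T, hsat, hc => by
    rw [List.cons_append, sat_cons_iff]
    rcases sat_cons_iff.1 hsat with h | ⟨h, hT⟩
    exacts [Or.inl h, Or.inr ⟨h, sat_append_singleton hT fun hT' =>
      hc (List.forall_mem_cons.2 ⟨h, hT'⟩)⟩]

variable {𝒞 : Finset (A → ℚ≥0)} {Γ : Set (PrefStmt A)}

theorem mem_and_ne_of_mem_suppSet_union_oppSet {c : A → ℚ≥0} {φ : PrefStmt A}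
    (hc : c ∈ SuppSet 𝒞 φ ∪ OppSet 𝒞 φ) : c ∈ 𝒞 ∧ c φ.left ≠ c φ.right := by
  rcases hc with ⟨h, h'⟩ | ⟨h, h'⟩
  exacts [⟨h, h'.ne⟩, ⟨h, h'.ne'⟩]

theorem InconsBase.forall_not_mem_of_satAll {Γ' : Set (PrefStmt A)} {C' : Set (A → ℚ≥0)}
    (hB : InconsBase 𝒞 Γ Γ' C') :
    ∀ {H : List (A → ℚ≥0)}, (∀ c ∈ H, c ∈ 𝒞) → SatAll H Γ' → ∀ c ∈ H, c ∉ C'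
  | [], _, _ => by simp
  | d :: T, hmem, hsat => by
    have hd : d ∉ C' := fun hd => by
      obtain ⟨φ, hφ, -, hopp⟩ := hB.2.2.2 d hd
      have hle : d φ.left ≤ d φ.right := by
        rcases sat_cons_iff.1 (hsat φ hφ) with h | ⟨h, -⟩
        exacts [h.le, h.le]
      exact hle.not_gt hopp
    have htail : SatAll T Γ' := fun φ hφ =>
      ((sat_cons_iff.1 (hsat φ hφ)).resolve_left fun h =>
        hd (hB.2.2.1 φ hφ (Or.inl ⟨hmem d List.mem_cons_self, h⟩))).2
    exact List.forall_mem_cons.2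
      ⟨hd, hB.forall_not_mem_of_satAll (fun c hc => hmem c (List.mem_cons_of_mem _ hc)) htail⟩

theorem forall_not_mem_MIBC_of_satAll {H : List (A → ℚ≥0)} (hmem : ∀ c ∈ H, c ∈ 𝒞)
    (hsat : SatAll H Γ) : ∀ c ∈ H, c ∉ MIBC 𝒞 Γ := by
  rintro c hc ⟨Γ', C', hB, hcC'⟩
  exact hB.forall_not_mem_of_satAll hmem (fun φ hφ => hsat φ (hB.1 hφ)) c hc hcC'

theorem IsModel.diff_MIBC {H : List (A → ℚ≥0)} (hH : IsModel 𝒞 H) (hsat : SatAll H Γ) :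
    IsModel ((𝒞 : Set (A → ℚ≥0)) \ MIBC 𝒞 Γ) H :=
  ⟨hH.1, fun c hc => ⟨hH.2 c hc, forall_not_mem_MIBC_of_satAll hH.2 hsat c hc⟩⟩

theorem inconsBase_MIB (𝒞 : Finset (A → ℚ≥0)) (Γ : Set (PrefStmt A)) :
    InconsBase 𝒞 Γ (MIBGamma 𝒞 Γ) (MIBC 𝒞 Γ) := by
  refine ⟨?_, ?_, ?_, ?_⟩
  · rintro φ ⟨Γ', C', hB, hφ⟩
    exact hB.1 hφ
  · rintro c ⟨Γ', C', hB, hc⟩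
    exact hB.2.1 hc
  · rintro φ ⟨Γ', C', hB, hφ⟩ c hc
    exact ⟨Γ', C', hB, hB.2.2.1 φ hφ hc⟩
  · rintro c ⟨Γ', C', hB, hc⟩
    obtain ⟨φ, hφ, hopp⟩ := hB.2.2.2 c hc
    exact ⟨φ, ⟨Γ', C', hB, hφ⟩, hopp⟩

/-- The base witnessing this consists of the statements of `Γ` tied by `H`, their supporters and
opponents, and `MIB(Γ, 𝒞)`. -/
theorem suppSet_union_oppSet_subset_MIBC {H : List (A → ℚ≥0)}
    (hopp : ∀ c ∈ 𝒞, c ∉ MIBC 𝒞 Γ → c ∉ H → ∃ ψ ∈ Γ, Ties H ψ ∧ c ∈ OppSet 𝒞 ψ)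
    {φ : PrefStmt A} (hφ : φ ∈ Γ) (htie : Ties H φ) :
    SuppSet 𝒞 φ ∪ OppSet 𝒞 φ ⊆ MIBC 𝒞 Γ := by
  have hMIB := inconsBase_MIB 𝒞 Γ
  have hB : InconsBase 𝒞 Γ ({ψ | ψ ∈ Γ ∧ Ties H ψ} ∪ MIBGamma 𝒞 Γ)
      ({c | ∃ ψ ∈ Γ, Ties H ψ ∧ c ∈ SuppSet 𝒞 ψ ∪ OppSet 𝒞 ψ} ∪ MIBC 𝒞 Γ) := by
    refine ⟨?_, ?_, ?_, ?_⟩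
    · rintro ψ (hψ | hψ)
      exacts [hψ.1, hMIB.1 hψ]
    · rintro c (⟨ψ, -, -, hc⟩ | hc)
      exacts [(mem_and_ne_of_mem_suppSet_union_oppSet hc).1, hMIB.2.1 hc]
    · rintro ψ (hψ | hψ) c hc
      exacts [Or.inl ⟨ψ, hψ.1, hψ.2, hc⟩, Or.inr (hMIB.2.2.1 ψ hψ hc)]
    · rintro c (⟨ψ, -, hψtie, hc⟩ | hc)
      · obtain ⟨hc𝒞, hne⟩ := mem_and_ne_of_mem_suppSet_union_oppSet hc
        by_cases hcM : c ∈ MIBC 𝒞 Γ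
        · obtain ⟨χ, hχ, hχopp⟩ := hMIB.2.2.2 c hcM
          exact ⟨χ, Or.inr hχ, hχopp⟩
        · obtain ⟨χ, hχ, hχtie, hχopp⟩ := hopp c hc𝒞 hcM fun hcH => hne (hψtie c hcH)
          exact ⟨χ, Or.inl ⟨hχ, hχtie⟩, hχopp⟩
      · obtain ⟨χ, hχ, hχopp⟩ := hMIB.2.2.2 c hc
        exact ⟨χ, Or.inr hχ, hχopp⟩
  exact fun c hc => ⟨_, _, hB, Or.inl ⟨φ, hφ, htie, hc⟩⟩

theorem exists_satAll_append_singleton {H : List (A → ℚ≥0)} (hsat : SatAll H Γ)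
    (hne : ∃ c ∈ 𝒞, c ∉ MIBC 𝒞 Γ ∧ c ∉ H) :
    ∃ c ∈ 𝒞, c ∉ MIBC 𝒞 Γ ∧ c ∉ H ∧ SatAll (H ++ [c]) Γ := by
  by_contra! hext
  have hopp : ∀ c ∈ 𝒞, c ∉ MIBC 𝒞 Γ → c ∉ H → ∃ ψ ∈ Γ, Ties H ψ ∧ c ∈ OppSet 𝒞 ψ := by
    intro c hc hcM hcH
    obtain ⟨φ, hφ, hfail⟩ := not_forall₂.1 (hext c hc hcM hcH)
    by_contra! hno
    exact hfail (sat_append_singleton (hsat φ hφ) fun htie =>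
      not_lt.1 fun hlt => hno φ hφ htie ⟨hc, hlt⟩)
  obtain ⟨c, hc, hcM, hcH⟩ := hne
  obtain ⟨φ, hφ, htie, hcopp⟩ := hopp c hc hcM hcH
  exact hcM (suppSet_union_oppSet_subset_MIBC hopp hφ htie (Or.inr hcopp))

theorem strongCons_diff_MIBC (H : List (A → ℚ≥0)) (hH : IsModel 𝒞 H) (hsat : SatAll H Γ) :
    StrongCons ((𝒞 : Set (A → ℚ≥0)) \ MIBC 𝒞 Γ) Γ := by
  classical
  by_cases hfull : ∀ c ∈ 𝒞, c ∉ MIBC 𝒞 Γ → c ∈ H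
  · exact ⟨H, ⟨hH.1, fun c => ⟨(hH.diff_MIBC hsat).2 c, fun hc => hfull c hc.1 hc.2⟩⟩, hsat⟩
  · push Not at hfull
    obtain ⟨c, hc, -, hcH, hsat'⟩ := exists_satAll_append_singleton hsat hfull
    have hH' : IsModel 𝒞 (H ++ [c]) :=
      ⟨hH.1.append (List.nodup_singleton c) (by simpa using hcH),
        by simpa [or_imp, forall_and] using ⟨hH.2, hc⟩⟩
    have hlen : (H ++ [c]).length ≤ 𝒞.card := by
      rw [← List.toFinset_card_of_nodup hH'.1]
      exact Finset.card_le_card fun x hx => hH'.2 x (List.mem_toFinset.1 hx)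
    exact strongCons_diff_MIBC (H ++ [c]) hH' hsat'
termination_by 𝒞.card - H.length
decreasing_by simp only [List.length_append, List.length_singleton] at hlen ⊢; omega

end

theorem stmt_16_general {A : Type} (𝒞 : Finset (A → ℚ≥0)) (Γ : Set (PrefStmt A))
    (hcons : ∃ H : List (A → ℚ≥0), IsModel (𝒞 : Set (A → ℚ≥0)) H ∧ SatAll H Γ) :
    StrongCons ((𝒞 : Set (A → ℚ≥0)) \ MIBC 𝒞 Γ) Γ ∧
    ∀ φ : PrefStmt A,
      Entails (𝒞 : Set (A → ℚ≥0)) Γ φ ↔ Entails ((𝒞 : Set (A → ℚ≥0)) \ MIBC 𝒞 Γ) Γ φ := by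
  obtain ⟨H, hH, hsat⟩ := hcons
  refine ⟨strongCons_diff_MIBC H hH hsat, fun φ => ⟨?_, ?_⟩⟩
  · exact fun h H' hH' hsat' => h H' ⟨hH'.1, fun c hc => (hH'.2 c hc).1⟩ hsat'
  · exact fun h H' hH' hsat' => h H' (hH'.diff_MIBC hsat') hsat'

/-- If `Γ` is `C(1)`-consistent and `C' = 𝒞 − C^⊥`, then `Γ` is strongly `C'(1)`-consistent,
and `Γ ⊨_{C(1)} φ` iff `Γ ⊨_{C'(1)} φ`. -/
theorem stmt_16 {A : Type} [Fintype A] (𝒞 : Finset (A → ℚ≥0)) (Γ : Set (PrefStmt A))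
    (hcons : ∃ H : List (A → ℚ≥0), IsModel (𝒞 : Set (A → ℚ≥0)) H ∧ SatAll H Γ) :
    StrongCons ((𝒞 : Set (A → ℚ≥0)) \ MIBC 𝒞 Γ) Γ ∧
    ∀ φ : PrefStmt A,
      Entails (𝒞 : Set (A → ℚ≥0)) Γ φ ↔ Entails ((𝒞 : Set (A → ℚ≥0)) \ MIBC 𝒞 Γ) Γ φ :=
  stmt_16_general 𝒞 Γ hcons
end
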